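/- Let M be a symmetric integer n×n matrix (n ≥ 1) that is not copositive, with binary encoding length L = Σ_{1≤i≤j≤n} (⌈log₂(|m_ij|+1)⌉ + 1) and d = max_{i,j} |m_ij|. Let l be the minimal natural number with 2^l ≥ 4dn². Then there exists a rational vector y ∈ ℚⁿ with nonnegative entries such that yᵀMy < 0 and each coordinate y_j has the form a_j/2^l for a natural number a_j with a_j/2^l ≤ 2^{2L−1} + 1. -/

import Mathlib

/-
Let `μ < 0` be the minimum of `xᵀ M x` on the standard simplex, attained at a point `x` whose
support `S` is as small as possible. The optimality conditions give `(M x)ᵢ = μ` on `S`, and the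
minimality of the support makes the principal submatrix `M_SS` nonsingular: a kernel vector would
give a line of minimizers along which the support can be shrunk. Cramer's rule turns
`M_SS x_S = μ 𝟙` into `det M_SS = μ · 𝟙ᵀ adj(M_SS) 𝟙`, so `|μ| E ≥ 1` for the integer
`E = |𝟙ᵀ adj(M_SS) 𝟙| ≤ n² n! ∏ (|mᵢⱼ| + 1) ≤ 2^(2L) / 4`. With `B = 2^(2L-1) + 1 > E`, the
value of the form at `B x` is `B² μ ≤ -B`, while rounding `B x` down to the grid `2⁻ˡ ℕ` changes
it by at most `2 B d n² 2⁻ˡ ≤ B / 2`.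
-/

open Matrix Finset

/-- Binary encoding length of a symmetric integer matrix:
`L = Σ_{1 ≤ i ≤ j ≤ n} (⌈log₂(|m_ij|+1)⌉ + 1)`. -/
def encodingLength {n : ℕ} (M : Matrix (Fin n) (Fin n) ℤ) : ℕ :=
  ∑ i : Fin n, ∑ j ∈ Finset.univ.filter (fun j => i ≤ j),
    (Nat.clog 2 ((M i j).natAbs + 1) + 1)

/-- The largest absolute value of an entry of an integer matrix. -/
def maxAbs {n : ℕ} (M : Matrix (Fin n) (Fin n) ℤ) : ℕ :=
  Finset.univ.sup fun p : Fin n × Fin n => (M p.1 p.2).natAbs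

open Filter Topology

section QuadraticForm

variable {ι R : Type*} [Fintype ι] [CommRing R]

lemma Matrix.IsSymm.dotProduct_mulVec_comm {N : Matrix ι ι R} (hN : N.IsSymm) (x y : ι → R) :
    x ⬝ᵥ N *ᵥ y = y ⬝ᵥ N *ᵥ x := by
  rw [dotProduct_mulVec, ← mulVec_transpose, hN.eq, dotProduct_comm]

lemma Matrix.IsSymm.add_smul_dotProduct_mulVec_add_smul {N : Matrix ι ι R} (hN : N.IsSymm)
    (x v : ι → R) (t : R) :
    (x + t • v) ⬝ᵥ N *ᵥ (x + t • v)
      = x ⬝ᵥ N *ᵥ x + 2 * t * (v ⬝ᵥ N *ᵥ x) + t ^ 2 * (v ⬝ᵥ N *ᵥ v) := by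
  simp only [mulVec_add, mulVec_smul, add_dotProduct, dotProduct_add, smul_dotProduct,
    dotProduct_smul, hN.dotProduct_mulVec_comm x v, smul_eq_mul]
  ring

lemma smul_dotProduct_mulVec_smul (N : Matrix ι ι R) (c : R) (x : ι → R) :
    (c • x) ⬝ᵥ N *ᵥ (c • x) = c ^ 2 * (x ⬝ᵥ N *ᵥ x) := by
  simp only [mulVec_smul, smul_dotProduct, dotProduct_smul, smul_eq_mul]
  ring

end QuadraticForm

section PosSupport

variable {ι 𝕜 : Type*} [Fintype ι]

def posSupport [Zero 𝕜] [LinearOrder 𝕜] (x : ι → 𝕜) : Finset ι :=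
  {i | 0 < x i}

lemma mem_posSupport [Zero 𝕜] [LinearOrder 𝕜] {x : ι → 𝕜} {i : ι} :
    i ∈ posSupport x ↔ 0 < x i := by
  simp [posSupport]

lemma eq_zero_of_notMem_posSupport [Zero 𝕜] [LinearOrder 𝕜] {x : ι → 𝕜} (hx : 0 ≤ x)
    {i : ι} (hi : i ∉ posSupport x) : x i = 0 :=
  le_antisymm (not_lt.1 (mt mem_posSupport.2 hi)) (hx i)

/-- Move from `x` along `v` until the first coordinate hits zero. -/
lemma exists_nonneg_add_smul_card_posSupport_lt [Field 𝕜] [LinearOrder 𝕜]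
    [IsStrictOrderedRing 𝕜] {x v : ι → 𝕜} (hx : 0 ≤ x)
    (hvx : ∀ i, x i = 0 → v i = 0) (hv : ∃ i, v i < 0) :
    ∃ t : 𝕜, 0 ≤ x + t • v ∧ #(posSupport (x + t • v)) < #(posSupport x) := by
  obtain ⟨i₀, hi₀, hmin⟩ := exists_min_image ({i | v i < 0} : Finset ι)
    (fun i => x i / -v i) (by obtain ⟨i, hi⟩ := hv; exact ⟨i, by simpa using hi⟩)
  simp only [mem_filter, mem_univ, true_and] at hi₀ hmin
  have hxi₀ : 0 < x i₀ := (hx i₀).lt_of_ne' fun h => hi₀.ne (hvx i₀ h)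
  set t := x i₀ / -v i₀
  have ht : 0 ≤ t := div_nonneg (hx i₀) (by linarith)
  have hnonneg : 0 ≤ x + t • v := by
    intro i
    simp only [Pi.add_apply, Pi.smul_apply, smul_eq_mul, Pi.zero_apply]
    rcases lt_or_ge (v i) 0 with hvi | hvi
    · have := (le_div_iff₀ (neg_pos.2 hvi)).1 (hmin i hvi)
      linarith
    · have hxi : 0 ≤ x i := hx i
      linarith [mul_nonneg ht hvi]
  refine ⟨t, hnonneg, card_lt_card ⟨fun i hi => ?_, fun h => ?_⟩⟩
  · rw [mem_posSupport] at hi ⊢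
    refine (hx i).lt_of_ne' fun h => ?_
    simp [h, hvx i h] at hi
  · have hzero : x i₀ + t * v i₀ = 0 := by
      rw [div_mul_eq_mul_div, div_neg, mul_div_assoc, div_self hi₀.ne]
      ring
    have := mem_posSupport.1 (h (mem_posSupport.2 hxi₀))
    simp only [Pi.add_apply, Pi.smul_apply, smul_eq_mul, hzero] at this
    exact this.false

end PosSupport

lemma Finset.sum_coe_sort_of_eq_zero {ι M : Type*} [Fintype ι] [AddCommMonoid M] {S : Finset ι}
    {f : ι → M} (hf : ∀ i ∉ S, f i = 0) : ∑ i : S, f i = ∑ i, f i :=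
  (sum_coe_sort S f).trans (sum_subset (subset_univ S) fun i _ hi => hf i hi)

section Minimizer

variable {ι : Type*} [Fintype ι] (N : Matrix ι ι ℝ)

lemma exists_mem_stdSimplex_dotProduct_mulVec_neg
    (h : ∃ x : ι → ℝ, (∀ i, 0 ≤ x i) ∧ x ⬝ᵥ N *ᵥ x < 0) :
    ∃ x ∈ stdSimplex ℝ ι, x ⬝ᵥ N *ᵥ x < 0 := by
  obtain ⟨w, hw, hq⟩ := h
  have hs : 0 < ∑ i, w i := by
    refine (sum_nonneg fun i _ => hw i).lt_of_ne fun hs => hq.ne ?_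
    have : w = 0 := funext fun i =>
      (sum_eq_zero_iff_of_nonneg fun j _ => hw j).1 hs.symm i (mem_univ i)
    simp [this]
  refine ⟨(∑ i, w i)⁻¹ • w, ⟨fun i => mul_nonneg (inv_nonneg.2 hs.le) (hw i), ?_⟩,
    ?_⟩
  · simp [← mul_sum, hs.ne']
  · rw [smul_dotProduct_mulVec_smul]
    exact mul_neg_of_pos_of_neg (by positivity) hq

lemma exists_isMinOn_stdSimplex_minimal_posSupport (hne : (stdSimplex ℝ ι).Nonempty) :
    ∃ x ∈ stdSimplex ℝ ι, IsMinOn (fun y => y ⬝ᵥ N *ᵥ y) (stdSimplex ℝ ι) x ∧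
      ∀ y ∈ stdSimplex ℝ ι, y ⬝ᵥ N *ᵥ y = x ⬝ᵥ N *ᵥ x →
        #(posSupport x) ≤ #(posSupport y) := by
  set q : (ι → ℝ) → ℝ := fun y => y ⬝ᵥ N *ᵥ y
  have hcont : Continuous q := by fun_prop
  obtain ⟨x₀, hx₀, hmin₀⟩ :=
    (isCompact_stdSimplex ℝ ι).exists_isMinOn hne hcont.continuousOn
  obtain ⟨x, ⟨hx, hmin⟩, hminimal⟩ := exists_minimalFor_of_wellFoundedLT
    (fun y => y ∈ stdSimplex ℝ ι ∧ IsMinOn q (stdSimplex ℝ ι) y)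
    (fun y => #(posSupport y)) ⟨x₀, hx₀, hmin₀⟩
  refine ⟨x, hx, hmin, fun y hy hqy => (le_total _ _).elim (hminimal ⟨hy, ?_⟩) id⟩
  exact fun z hz => hqy.trans_le (hmin hz)

end Minimizer

lemma nonneg_of_forall_mul_add_mul_sq_nonneg {b c : ℝ}
    (h : ∀ t ∈ Set.Ioc (0 : ℝ) 1, 0 ≤ b * t + c * t ^ 2) : 0 ≤ b := by
  have hlim : Tendsto (fun t => b + c * t) (𝓝[>] 0) (𝓝 b) := by
    have : Continuous (fun t : ℝ => b + c * t) := by fun_prop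
    simpa using (this.tendsto 0).mono_left nhdsWithin_le_nhds
  refine ge_of_tendsto hlim ?_
  filter_upwards [Ioc_mem_nhdsGT (zero_lt_one' ℝ)] with t ht
  have := h t ht
  have ht0 : 0 < t := ht.1
  nlinarith

section Simplex

variable {ι : Type*} [Fintype ι] [DecidableEq ι] {N : Matrix ι ι ℝ} {x : ι → ℝ}

lemma IsMinOn.dotProduct_mulVec_le_mulVec (hN : N.IsSymm) (hx : x ∈ stdSimplex ℝ ι)
    (hmin : IsMinOn (fun y => y ⬝ᵥ N *ᵥ y) (stdSimplex ℝ ι) x) (j : ι) :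
    x ⬝ᵥ N *ᵥ x ≤ (N *ᵥ x) j := by
  set v : ι → ℝ := Pi.single j 1 - x
  have hv : v ⬝ᵥ N *ᵥ x = (N *ᵥ x) j - x ⬝ᵥ N *ᵥ x := by
    simp only [v, sub_dotProduct, single_one_dotProduct]
  suffices 0 ≤ 2 * (v ⬝ᵥ N *ᵥ x) by linarith
  refine nonneg_of_forall_mul_add_mul_sq_nonneg (c := v ⬝ᵥ N *ᵥ v) fun t ht => ?_
  have hmem : x + t • v ∈ stdSimplex ℝ ι := by
    convert convex_stdSimplex ℝ ι hx (single_mem_stdSimplex ℝ j) (sub_nonneg.2 ht.2) ht.1.le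
      (by ring) using 1
    simp only [v, smul_sub]
    module
  have : x ⬝ᵥ N *ᵥ x ≤ (x + t • v) ⬝ᵥ N *ᵥ (x + t • v) := hmin hmem
  rw [hN.add_smul_dotProduct_mulVec_add_smul] at this
  linarith

lemma IsMinOn.mulVec_eq_of_pos (hN : N.IsSymm) (hx : x ∈ stdSimplex ℝ ι)
    (hmin : IsMinOn (fun y => y ⬝ᵥ N *ᵥ y) (stdSimplex ℝ ι) x) {i : ι} (hi : 0 < x i) :
    (N *ᵥ x) i = x ⬝ᵥ N *ᵥ x := by
  have hterm : ∀ j ∈ univ, 0 ≤ x j * ((N *ᵥ x) j - x ⬝ᵥ N *ᵥ x) := fun j _ =>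
    mul_nonneg (hx.1 j) (sub_nonneg.2 (hmin.dotProduct_mulVec_le_mulVec hN hx j))
  have hsum : ∑ j, x j * ((N *ᵥ x) j - x ⬝ᵥ N *ᵥ x) = 0 := by
    simp only [mul_sub, sum_sub_distrib, ← sum_mul, hx.2, one_mul]
    exact sub_eq_zero.2 rfl
  have := (sum_eq_zero_iff_of_nonneg hterm).1 hsum i (mem_univ i)
  linarith [(mul_eq_zero.1 this).resolve_left hi.ne']

lemma det_submatrix_posSupport_ne_zero (hN : N.IsSymm) (hx : x ∈ stdSimplex ℝ ι)
    (hstat : ∀ i, 0 < x i → (N *ᵥ x) i = x ⬝ᵥ N *ᵥ x) (hq : x ⬝ᵥ N *ᵥ x ≠ 0)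
    (hsupp : ∀ y ∈ stdSimplex ℝ ι, y ⬝ᵥ N *ᵥ y = x ⬝ᵥ N *ᵥ x →
      #(posSupport x) ≤ #(posSupport y)) :
    (N.submatrix ((↑) : posSupport x → ι) (↑)).det ≠ 0 := by
  set S := posSupport x
  intro hdet
  obtain ⟨w, hw, hNw⟩ := exists_mulVec_eq_zero_iff.2 hdet
  set v : ι → ℝ := Subtype.val.extend w 0
  have hv_on (i : S) : v i = w i := Subtype.val_injective.extend_apply _ _ _
  have hv_off (i : ι) (hi : i ∉ S) : v i = 0 :=
    Function.extend_apply' _ _ _ fun ⟨j, hj⟩ => hi (hj ▸ j.2)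
  have hNv (i : S) : (N *ᵥ v) i = 0 := by
    have hNwi : (N.submatrix Subtype.val Subtype.val *ᵥ w) i = 0 := congrFun hNw i
    rw [← hNwi, mulVec, mulVec, dotProduct,
      ← sum_coe_sort_of_eq_zero fun j hj => by rw [hv_off j hj, mul_zero]]
    simp only [hv_on, dotProduct, submatrix_apply]
  have hvNx : v ⬝ᵥ N *ᵥ x = x ⬝ᵥ N *ᵥ x * ∑ i, v i := by
    rw [dotProduct, mul_sum]
    refine sum_congr rfl fun i _ => ?_
    by_cases hi : i ∈ S
    · rw [hstat i (mem_posSupport.1 hi), mul_comm]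
    · rw [hv_off i hi, zero_mul, mul_zero]
  have hxNv : x ⬝ᵥ N *ᵥ v = 0 := by
    refine sum_eq_zero fun i _ => ?_
    by_cases hi : i ∈ S
    · rw [hNv ⟨i, hi⟩, mul_zero]
    · rw [eq_zero_of_notMem_posSupport hx.1 hi, zero_mul]
  have hvNv : v ⬝ᵥ N *ᵥ v = 0 := by
    refine sum_eq_zero fun i _ => ?_
    by_cases hi : i ∈ S
    · rw [hNv ⟨i, hi⟩, mul_zero]
    · rw [hv_off i hi, zero_mul]
  have hvsum : ∑ i, v i = 0 := by
    have := hvNx.symm.trans ((hN.dotProduct_mulVec_comm v x).trans hxNv)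
    exact (mul_eq_zero.1 this).resolve_left hq
  have hvneg : ∃ i, v i < 0 := by
    by_contra! hvnn
    apply hw
    ext i
    rw [← hv_on]
    exact (sum_eq_zero_iff_of_nonneg fun j _ => hvnn j).1 hvsum i (mem_univ _)
  have hvx (i : ι) (hi : x i = 0) : v i = 0 := hv_off i fun h => (mem_posSupport.1 h).ne' hi
  obtain ⟨t, hnonneg, hlt⟩ := exists_nonneg_add_smul_card_posSupport_lt hx.1 hvx hvneg
  have hmem : x + t • v ∈ stdSimplex ℝ ι :=
    ⟨hnonneg, by simp [sum_add_distrib, ← mul_sum, hvsum, hx.2]⟩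
  have hval : (x + t • v) ⬝ᵥ N *ᵥ (x + t • v) = x ⬝ᵥ N *ᵥ x := by
    rw [hN.add_smul_dotProduct_mulVec_add_smul, hvNx, hvsum, hvNv]
    ring
  exact (hsupp _ hmem hval).not_gt hlt

end Simplex

lemma Matrix.det_eq_mul_sum_adjugate {ι R : Type*} [Fintype ι] [DecidableEq ι] [CommRing R]
    (A : Matrix ι ι R) {x : ι → R} {c : R} (hAx : A *ᵥ x = fun _ => c)
    (hx : ∑ i, x i = 1) :
    A.det = c * ∑ i, ∑ j, A.adjugate i j := by
  have h : A.adjugate *ᵥ (A *ᵥ x) = A.det • x := by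
    rw [mulVec_mulVec, adjugate_mul, smul_mulVec, one_mulVec]
  have hsum := congrArg (fun u => ∑ i, u i) h
  simp only [hAx, Pi.smul_apply, smul_eq_mul, ← mul_sum, hx, mul_one] at hsum
  rw [← hsum]
  simp only [mulVec, dotProduct, mul_sum]
  exact sum_congr rfl fun _ _ => sum_congr rfl fun _ _ => mul_comm _ _

lemma one_le_abs_mul_natAbs_sum_adjugate {ι : Type*} [Fintype ι] [DecidableEq ι]
    (A : Matrix ι ι ℤ) (hA : A.det ≠ 0) {x : ι → ℝ} {c : ℝ}
    (hAx : A.map (↑) *ᵥ x = fun _ => c) (hx : ∑ i, x i = 1) :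
    1 ≤ |c| * ((∑ i, ∑ j, A.adjugate i j).natAbs : ℝ) := by
  have h := (A.map ((↑) : ℤ → ℝ)).det_eq_mul_sum_adjugate hAx hx
  have hdet : ((A.det : ℤ) : ℝ) = (A.map (↑)).det := (Int.castRingHom ℝ).map_det A
  have hadj :
      ((∑ i, ∑ j, A.adjugate i j : ℤ) : ℝ) = ∑ i, ∑ j, (A.map (↑)).adjugate i j := by
    have : (A.map ((↑) : ℤ → ℝ)).adjugate = A.adjugate.map (↑) :=
      ((Int.castRingHom ℝ).map_adjugate A).symm
    rw [this]
    push_cast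
    rfl
  rw [Nat.cast_natAbs, Int.cast_abs, hadj, ← abs_mul, ← h, ← hdet, ← Int.cast_abs]
  exact_mod_cast Int.one_le_abs hA

lemma exists_mem_stdSimplex_one_le_neg_mul_natAbs_sum_adjugate {ι : Type*} [Fintype ι]
    [DecidableEq ι] (M : Matrix ι ι ℤ) (hM : M.IsSymm)
    (hncop : ∃ x : ι → ℝ, (∀ i, 0 ≤ x i) ∧ x ⬝ᵥ M.map (↑) *ᵥ x < 0) :
    ∃ x ∈ stdSimplex ℝ ι, ∃ S : Finset ι, 1 ≤ -(x ⬝ᵥ M.map (↑) *ᵥ x) *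
      ((∑ i, ∑ j, (M.submatrix ((↑) : S → ι) (↑)).adjugate i j).natAbs : ℝ) := by
  set N : Matrix ι ι ℝ := M.map (↑)
  have hN : N.IsSymm := hM.map _
  obtain ⟨w, hw, hwneg⟩ := exists_mem_stdSimplex_dotProduct_mulVec_neg N hncop
  obtain ⟨x, hx, hmin, hsupp⟩ := exists_isMinOn_stdSimplex_minimal_posSupport N ⟨w, hw⟩
  set μ := x ⬝ᵥ N *ᵥ x
  have hμ : μ < 0 := (hmin hw).trans_lt hwneg
  have hstat (i : ι) (hi : 0 < x i) : (N *ᵥ x) i = μ := hmin.mulVec_eq_of_pos hN hx hi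
  set A : Matrix (posSupport x) (posSupport x) ℤ := M.submatrix (↑) (↑)
  have hdet : A.det ≠ 0 := by
    refine fun h0 => det_submatrix_posSupport_ne_zero hN hx hstat hμ.ne hsupp ?_
    have h := ((Int.castRingHom ℝ).map_det A).symm
    rwa [h0, map_zero] at h
  have hoff (i : ι) (hi : i ∉ posSupport x) : x i = 0 := eq_zero_of_notMem_posSupport hx.1 hi
  have hAx : A.map (↑) *ᵥ (fun i => x i) = fun _ => μ := funext fun i => by
    rw [← hstat i (mem_posSupport.1 i.2)]
    exact sum_coe_sort_of_eq_zero (f := fun j => N i j * x j) fun j hj => by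
      rw [hoff j hj, mul_zero]
  have hxA : ∑ i : posSupport x, x i = 1 := (sum_coe_sort_of_eq_zero hoff).trans hx.2
  refine ⟨x, hx, posSupport x, ?_⟩
  rw [← abs_of_neg hμ]
  exact one_le_abs_mul_natAbs_sum_adjugate A hdet hAx hxA

section IntegerBounds

variable {ι κ : Type*} [Fintype ι] [Fintype κ]

lemma prod_comp_le_prod_of_injective {M : Type*} [CommMonoid M] [Preorder M] [MulLeftMono M]
    {f : κ → ι} (hf : Function.Injective f) {g : ι → M} (hg : ∀ i, 1 ≤ g i) :
    ∏ k, g (f k) ≤ ∏ i, g i := by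
  calc ∏ k, g (f k) = ∏ i ∈ univ.map ⟨f, hf⟩, g i := (prod_map univ ⟨f, hf⟩ g).symm
    _ ≤ ∏ i, g i := prod_le_univ_prod_of_one_le' hg

lemma Matrix.natAbs_det_le [DecidableEq ι] (B : Matrix ι ι ℤ) :
    B.det.natAbs ≤ (Fintype.card ι).factorial * ∏ p : ι × ι, max 1 (B p.1 p.2).natAbs := by
  rw [det_apply]
  calc _ ≤ ∑ σ : Equiv.Perm ι, (Equiv.Perm.sign σ • ∏ i, B (σ i) i).natAbs :=
        Int.natAbs_sum_le _ _
    _ ≤ ∑ _σ : Equiv.Perm ι, ∏ p : ι × ι, max 1 (B p.1 p.2).natAbs := by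
        refine sum_le_sum fun σ _ => ?_
        rw [Units.smul_def, smul_eq_mul, Int.natAbs_mul, Int.units_natAbs, one_mul,
          ← Int.natAbsHom_apply, map_prod]
        calc ∏ i, Int.natAbsHom (B (σ i) i) ≤ ∏ i, max 1 (B (σ i) i).natAbs :=
              prod_le_prod' fun i _ => le_max_right _ _
          _ ≤ _ := prod_comp_le_prod_of_injective (f := fun i => (σ i, i))
              (g := fun p : ι × ι => max 1 (B p.1 p.2).natAbs)
              (fun i j h => congrArg Prod.snd h) fun _ => le_max_left _ _
    _ = _ := by rw [sum_const, card_univ, Fintype.card_perm, smul_eq_mul]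

lemma Matrix.natAbs_adjugate_apply_le [DecidableEq ι] (A : Matrix ι ι ℤ) (i j : ι) :
    (A.adjugate i j).natAbs
      ≤ (Fintype.card ι).factorial * ∏ p : ι × ι, max 1 (A p.1 p.2).natAbs := by
  rw [adjugate_apply]
  refine (natAbs_det_le _).trans (Nat.mul_le_mul_left _ (prod_le_prod' fun p _ => ?_))
  rw [updateRow_apply]
  split_ifs
  · rw [Pi.single_apply]
    split_ifs <;> simp
  · exact le_rfl

lemma Matrix.natAbs_sum_adjugate_le [DecidableEq ι] (A : Matrix ι ι ℤ) :
    (∑ i, ∑ j, A.adjugate i j).natAbs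
      ≤ Fintype.card ι ^ 2 * (Fintype.card ι).factorial
        * ∏ p : ι × ι, max 1 (A p.1 p.2).natAbs := by
  calc _ ≤ ∑ i, ∑ j, (A.adjugate i j).natAbs :=
        (Int.natAbs_sum_le _ _).trans (sum_le_sum fun i _ => Int.natAbs_sum_le _ _)
    _ ≤ ∑ _i : ι, ∑ _j : ι,
          (Fintype.card ι).factorial * ∏ p : ι × ι, max 1 (A p.1 p.2).natAbs :=
        sum_le_sum fun i _ => sum_le_sum fun j _ => A.natAbs_adjugate_apply_le i j
    _ = _ := by simp only [sum_const, card_univ, smul_eq_mul]; ring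

end IntegerBounds

lemma sum_add_sum_diag_eq_two_nsmul_sum_le {ι M : Type*} [Fintype ι] [LinearOrder ι]
    [AddCommMonoid M] {f : ι → ι → M} (hf : ∀ i j, f i j = f j i) :
    ∑ i, ∑ j, f i j + ∑ i, f i i = 2 • ∑ i, ∑ j with i ≤ j, f i j := by
  have hswap : ∑ i, ∑ j with i ≤ j, f i j = ∑ i, ∑ j with j ≤ i, f i j := by
    simp only [sum_filter]
    rw [sum_comm]
    simp only [hf]
  rw [two_nsmul]
  nth_rewrite 2 [hswap]
  simp only [sum_filter, ← sum_add_distrib]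
  refine sum_congr rfl fun i _ => ?_
  have hsplit (j : ι) : (if i ≤ j then f i j else 0) + (if j ≤ i then f i j else 0)
      = f i j + if i = j then f i j else 0 := by
    rcases lt_trichotomy i j with h | rfl | h
    · simp [h.le, not_le.2 h, h.ne]
    · simp
    · simp [h.le, not_le.2 h, h.ne']
  rw [sum_congr rfl fun j _ => hsplit j, sum_add_distrib, sum_ite_eq]
  simp

lemma prod_natAbs_add_one_mul_two_pow_le {n : ℕ} (M : Matrix (Fin n) (Fin n) ℤ)
    (hM : M.IsSymm) :
    (∏ p : Fin n × Fin n, ((M p.1 p.2).natAbs + 1)) * 2 ^ (n ^ 2 + n)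
      ≤ 2 ^ (2 * encodingLength M) := by
  set c : Fin n → Fin n → ℕ := fun i j => Nat.clog 2 ((M i j).natAbs + 1)
  have hsum : ∑ i, ∑ j, c i j + (n ^ 2 + n) ≤ 2 * encodingLength M := by
    have h := sum_add_sum_diag_eq_two_nsmul_sum_le (f := fun i j => c i j + 1)
      fun i j => by simp only [c, hM.apply i j]
    rw [smul_eq_mul] at h
    rw [encodingLength, ← h]
    simp only [sum_add_distrib, sum_const, card_univ, Fintype.card_fin, smul_eq_mul, mul_one]
    rw [sq]
    linarith [Nat.zero_le (∑ i, c i i)]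
  calc (∏ p : Fin n × Fin n, ((M p.1 p.2).natAbs + 1)) * 2 ^ (n ^ 2 + n)
      ≤ (∏ p : Fin n × Fin n, 2 ^ c p.1 p.2) * 2 ^ (n ^ 2 + n) :=
        Nat.mul_le_mul_right _ (prod_le_prod' fun p _ => Nat.le_pow_clog one_lt_two _)
    _ = 2 ^ (∑ i, ∑ j, c i j + (n ^ 2 + n)) := by
        rw [prod_pow_eq_pow_sum, Fintype.sum_prod_type, ← pow_add]
    _ ≤ 2 ^ (2 * encodingLength M) := Nat.pow_le_pow_right two_pos hsum

lemma four_mul_sq_mul_factorial_le (n : ℕ) : 4 * (n ^ 2 * n.factorial) ≤ 2 ^ (n ^ 2 + n) := by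
  cases n with
  | zero => norm_num
  | succ m =>
    have h : m + 1 ≤ 2 ^ m := Nat.lt_two_pow_self
    calc 4 * ((m + 1) ^ 2 * (m + 1).factorial)
        ≤ 4 * ((2 ^ m) ^ 2 * (2 ^ m) ^ (m + 1)) := by
          gcongr
          exact (Nat.factorial_le_pow _).trans (Nat.pow_le_pow_left h _)
      _ = 2 ^ ((m + 1) ^ 2 + (m + 1)) := by
          rw [show (4 : ℕ) = 2 ^ 2 from rfl, ← pow_mul, ← pow_mul, ← pow_add, ← pow_add]
          ring_nf

lemma four_mul_natAbs_sum_adjugate_submatrix_le {n : ℕ} (M : Matrix (Fin n) (Fin n) ℤ)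
    (hM : M.IsSymm) {κ : Type*} [Fintype κ] [DecidableEq κ] {f : κ → Fin n}
    (hf : Function.Injective f) :
    4 * (∑ i, ∑ j, (M.submatrix f f).adjugate i j).natAbs ≤ 2 ^ (2 * encodingLength M) := by
  set P := ∏ p : Fin n × Fin n, ((M p.1 p.2).natAbs + 1)
  have hk : Fintype.card κ ≤ n := by simpa using Fintype.card_le_of_injective f hf
  have hP : ∏ p : κ × κ, max 1 ((M.submatrix f f) p.1 p.2).natAbs ≤ P :=
    (prod_comp_le_prod_of_injective (f := Prod.map f f) (hf.prodMap hf)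
      (g := fun p => max 1 (M p.1 p.2).natAbs) fun _ => le_max_left _ _).trans
      (prod_le_prod' fun p _ => max_le (by omega) (by omega))
  calc 4 * (∑ i, ∑ j, (M.submatrix f f).adjugate i j).natAbs
      ≤ 4 * (Fintype.card κ ^ 2 * (Fintype.card κ).factorial * P) :=
        Nat.mul_le_mul_left 4 ((natAbs_sum_adjugate_le _).trans (Nat.mul_le_mul_left _ hP))
    _ ≤ 4 * (n ^ 2 * n.factorial) * P := by
        rw [mul_assoc 4]
        gcongr
    _ ≤ 2 ^ (n ^ 2 + n) * P := Nat.mul_le_mul_right _ (four_mul_sq_mul_factorial_le n)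
    _ ≤ 2 ^ (2 * encodingLength M) := by
        rw [mul_comm]
        exact prod_natAbs_add_one_mul_two_pow_le M hM

lemma abs_intCast_le_maxAbs {n : ℕ} (M : Matrix (Fin n) (Fin n) ℤ) (i j : Fin n) :
    |((M i j : ℤ) : ℝ)| ≤ maxAbs M := by
  rw [← Int.cast_abs, ← Nat.cast_natAbs]
  exact_mod_cast le_sup (f := fun p : Fin n × Fin n => (M p.1 p.2).natAbs) (mem_univ (i, j))

lemma lt_two_pow_two_mul_sub_one_add_one {E L : ℕ} (h : 4 * E ≤ 2 ^ (2 * L)) :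
    E < 2 ^ (2 * L - 1) + 1 := by
  have : 2 ^ (2 * L) ≤ 2 * 2 ^ (2 * L - 1) := by
    rw [← pow_succ']
    exact Nat.pow_le_pow_right two_pos (by omega)
  omega

lemma Rat.cast_dotProduct_mulVec_intCast {ι : Type*} [Fintype ι] (M : Matrix ι ι ℤ)
    (y : ι → ℚ) :
    ((y ⬝ᵥ M.map (↑) *ᵥ y : ℚ) : ℝ)
      = (fun i => (y i : ℝ)) ⬝ᵥ M.map (↑) *ᵥ fun i => (y i : ℝ) := by
  simp only [dotProduct, mulVec, map_apply]
  push_cast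
  rfl

section Rounding

variable {ι : Type*} [Fintype ι]

lemma abs_dotProduct_mulVec_sub_le (N : Matrix ι ι ℝ) {d B h : ℝ}
    (hN : ∀ i j, |N i j| ≤ d) {y z : ι → ℝ} (hy : ∀ i, |y i| ≤ B)
    (hz : ∀ i, |z i| ≤ B) (hyz : ∀ i, |y i - z i| ≤ h) :
    |y ⬝ᵥ N *ᵥ y - z ⬝ᵥ N *ᵥ z| ≤ Fintype.card ι ^ 2 * (d * (2 * B * h)) := by
  have hexp :
      y ⬝ᵥ N *ᵥ y - z ⬝ᵥ N *ᵥ z = ∑ i, ∑ j, N i j * (y i * y j - z i * z j) := by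
    simp only [dotProduct, mulVec, mul_sum, ← sum_sub_distrib]
    exact sum_congr rfl fun i _ => sum_congr rfl fun j _ => by ring
  have hterm (i j : ι) : |N i j * (y i * y j - z i * z j)| ≤ d * (2 * B * h) := by
    have hprod : |y i * y j - z i * z j| ≤ 2 * B * h :=
      calc |y i * y j - z i * z j| = |(y i - z i) * y j + z i * (y j - z j)| := by ring_nf
        _ ≤ |y i - z i| * |y j| + |z i| * |y j - z j| := by
          rw [← abs_mul, ← abs_mul]
          exact abs_add_le _ _
        _ ≤ h * B + B * h := by
          gcongr
          exacts [(abs_nonneg _).trans (hyz i), hyz i, hy j, (abs_nonneg _).trans (hz i), hz i,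
            hyz j]
        _ = 2 * B * h := by ring
    rw [abs_mul]
    exact mul_le_mul (hN i j) hprod (abs_nonneg _) ((abs_nonneg _).trans (hN i j))
  calc |y ⬝ᵥ N *ᵥ y - z ⬝ᵥ N *ᵥ z|
      ≤ ∑ i, ∑ j, |N i j * (y i * y j - z i * z j)| := by
        rw [hexp]
        exact (abs_sum_le_sum_abs _ _).trans (sum_le_sum fun i _ => abs_sum_le_sum_abs _ _)
    _ ≤ ∑ _i : ι, ∑ _j : ι, d * (2 * B * h) :=
        sum_le_sum fun i _ => sum_le_sum fun j _ => hterm i j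
    _ = Fintype.card ι ^ 2 * (d * (2 * B * h)) := by
        simp only [sum_const, card_univ, nsmul_eq_mul]
        ring

/-- The witness is `a = ⌊2ˡ B x⌋₊`, coordinatewise. -/
lemma exists_nat_div_two_pow_dotProduct_mulVec_neg (N : Matrix ι ι ℝ) {d : ℝ}
    (hN : ∀ i j, |N i j| ≤ d) {l : ℕ} (hl : 4 * d * Fintype.card ι ^ 2 ≤ 2 ^ l)
    {x : ι → ℝ} (hx : x ∈ stdSimplex ℝ ι) {B : ℕ}
    (hB : B * (x ⬝ᵥ N *ᵥ x) ≤ -1) :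
    ∃ a : ι → ℕ, (∀ j, a j ≤ B * 2 ^ l) ∧
      (fun j => (a j : ℝ) / 2 ^ l) ⬝ᵥ N *ᵥ (fun j => (a j : ℝ) / 2 ^ l) < 0 := by
  have hpow : (0 : ℝ) < 2 ^ l := by positivity
  have hBpos : (0 : ℝ) < B := Nat.cast_pos.2 (Nat.pos_of_ne_zero fun h => by norm_num [h] at hB)
  set z : ι → ℝ := (B : ℝ) • x
  set a : ι → ℕ := fun j => ⌊z j * 2 ^ l⌋₊
  set y : ι → ℝ := fun j => (a j : ℝ) / 2 ^ l
  have hz (j : ι) : 0 ≤ z j ∧ z j ≤ B := by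
    have hxj : x j ≤ 1 := hx.2 ▸ single_le_sum (fun i _ => hx.1 i) (mem_univ j)
    simp only [z, Pi.smul_apply, smul_eq_mul]
    exact ⟨mul_nonneg hBpos.le (hx.1 j), mul_le_of_le_one_right hBpos.le hxj⟩
  have hyz (j : ι) : y j ≤ z j ∧ z j < y j + 1 / 2 ^ l := by
    simp only [y, a, ← add_div, div_le_iff₀ hpow, lt_div_iff₀ hpow]
    exact ⟨Nat.floor_le (mul_nonneg (hz j).1 hpow.le), Nat.lt_floor_add_one _⟩
  have hy (j : ι) : 0 ≤ y j := by positivity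
  have herr : |y ⬝ᵥ N *ᵥ y - z ⬝ᵥ N *ᵥ z| ≤ B / 2 := by
    refine (abs_dotProduct_mulVec_sub_le N hN (h := 1 / 2 ^ l)
      (fun j => abs_le.2 ⟨by linarith [hy j], by linarith [(hyz j).1, (hz j).2]⟩)
      (fun j => abs_le.2 ⟨by linarith [(hz j).1], (hz j).2⟩)
      (fun j => abs_le.2 ⟨by linarith [hyz j], by linarith [hyz j]⟩)).trans ?_
    calc (Fintype.card ι : ℝ) ^ 2 * (d * (2 * B * (1 / 2 ^ l)))
        = (B : ℝ) / 2 * (4 * d * Fintype.card ι ^ 2) / 2 ^ l := by field_simp; ring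
      _ ≤ (B : ℝ) / 2 := by
        rw [div_le_iff₀ hpow]
        exact mul_le_mul_of_nonneg_left hl (by positivity)
  refine ⟨a, fun j => Nat.floor_le_of_le ?_, ?_⟩
  · exact_mod_cast mul_le_mul_of_nonneg_right (hz j).2 hpow.le
  · calc y ⬝ᵥ N *ᵥ y ≤ z ⬝ᵥ N *ᵥ z + B / 2 := by linarith [(abs_le.1 herr).2]
      _ = B * (B * (x ⬝ᵥ N *ᵥ x)) + B / 2 := by rw [smul_dotProduct_mulVec_smul]; ring
      _ ≤ B * (-1) + B / 2 := by gcongr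
      _ < 0 := by linarith

end Rounding

theorem stmt18_general {n : ℕ} (M : Matrix (Fin n) (Fin n) ℤ)
    (hsym : M.IsSymm)
    (hncop : ∃ x : Fin n → ℝ, (∀ i, 0 ≤ x i) ∧
      x ⬝ᵥ (M.map ((↑) : ℤ → ℝ)) *ᵥ x < 0)
    (L d : ℕ) (hL : L = encodingLength M) (hd : d = maxAbs M)
    (l : ℕ) (hl : 4 * d * n ^ 2 ≤ 2 ^ l) :
    ∃ y : Fin n → ℚ, (∀ j, 0 ≤ y j) ∧
      y ⬝ᵥ (M.map ((↑) : ℤ → ℚ)) *ᵥ y < 0 ∧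
      ∀ j, ∃ a : ℕ, y j = (a : ℚ) / 2 ^ l ∧
        (a : ℚ) / 2 ^ l ≤ 2 ^ (2 * L - 1) + 1 := by
  set N : Matrix (Fin n) (Fin n) ℝ := M.map (↑)
  obtain ⟨x, hx, S, hE⟩ := exists_mem_stdSimplex_one_le_neg_mul_natAbs_sum_adjugate M hsym hncop
  set E := (∑ i, ∑ j, (M.submatrix ((↑) : S → Fin n) (↑)).adjugate i j).natAbs
  have hEB : E < 2 ^ (2 * L - 1) + 1 := lt_two_pow_two_mul_sub_one_add_one
    (hL ▸ four_mul_natAbs_sum_adjugate_submatrix_le M hsym Subtype.val_injective)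
  have hBx : ((2 ^ (2 * L - 1) + 1 : ℕ) : ℝ) * (x ⬝ᵥ N *ᵥ x) ≤ -1 := by
    have : (E : ℝ) < (2 ^ (2 * L - 1) + 1 : ℕ) := by exact_mod_cast hEB
    nlinarith [(Nat.cast_nonneg E : (0 : ℝ) ≤ E)]
  obtain ⟨a, haB, hneg⟩ := exists_nat_div_two_pow_dotProduct_mulVec_neg N
    (fun i j => hd ▸ abs_intCast_le_maxAbs M i j)
    (by simpa using (by exact_mod_cast hl : (4 * d * n ^ 2 : ℝ) ≤ 2 ^ l)) hx hBx
  refine ⟨fun j => (a j : ℚ) / 2 ^ l, fun j => by positivity, ?_, fun j => ⟨a j, rfl, ?_⟩⟩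
  · have := Rat.cast_dotProduct_mulVec_intCast M fun j => (a j : ℚ) / 2 ^ l
    push_cast at this
    exact_mod_cast this ▸ hneg
  · rw [div_le_iff₀ (by positivity)]
    exact_mod_cast haB j

theorem stmt18 {n : ℕ} (hn : 1 ≤ n) (M : Matrix (Fin n) (Fin n) ℤ)
    (hsym : M.IsSymm)
    (hncop : ∃ x : Fin n → ℝ, (∀ i, 0 ≤ x i) ∧
      x ⬝ᵥ (M.map ((↑) : ℤ → ℝ)) *ᵥ x < 0)
    (L d : ℕ) (hL : L = encodingLength M) (hd : d = maxAbs M)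
    (l : ℕ) (hl : 4 * d * n ^ 2 ≤ 2 ^ l)
    (hlmin : ∀ l' : ℕ, 4 * d * n ^ 2 ≤ 2 ^ l' → l ≤ l') :
    ∃ y : Fin n → ℚ, (∀ j, 0 ≤ y j) ∧
      y ⬝ᵥ (M.map ((↑) : ℤ → ℚ)) *ᵥ y < 0 ∧
      ∀ j, ∃ a : ℕ, y j = (a : ℚ) / 2 ^ l ∧
        (a : ℚ) / 2 ^ l ≤ 2 ^ (2 * L - 1) + 1 :=
  stmt18_general M hsym hncop L d hL hd l hl
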